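/- arXiv:1111.0094 — 3 statements merged into one kernel-verified Lean document; each statement's English description precedes it below -/
import Mathlib

section
/- (Elder's theorem) For all positive integers n and k, the total number of occurrences of the part k among all partitions of n equals the number of pairs (λ, m) where λ is a partition of n and m is a part-size occurring at least k times in λ; i.e., Q_k(n) = V_k(n). -/
/-- Number of partitions of `n`. -/
def P (n : ℕ) : ℕ := Fintype.card (Nat.Partition n)

/-- Partition function extended to `ℤ`, zero for negative arguments. -/
def PZ (z : ℤ) : ℕ := if z < 0 then 0 else P z.toNat

/-- Total number of occurrences of the part `k` over all partitions of `n`. -/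
def Q (k n : ℕ) : ℕ := ∑ p : Nat.Partition n, Multiset.count k p.parts

/-- `Q` extended to `ℤ`, zero for non-positive arguments. -/
def QZ (k : ℕ) (z : ℤ) : ℕ := if z ≤ 0 then 0 else Q k z.toNat

/-- Sum over all partitions of `n` of the number of distinct part-sizes. -/
def S (n : ℕ) : ℕ := ∑ p : Nat.Partition n, p.parts.toFinset.card

/-- Number of pairs `(λ, m)` with `λ` a partition of `n` and `m` a part-size
occurring at least `k` times in `λ`. -/
def V (k n : ℕ) : ℕ :=
  ∑ p : Nat.Partition n, (p.parts.toFinset.filter (fun m => k ≤ p.parts.count m)).card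

/-!
Both sides are counted by layers. A partition `λ ⊢ n` contributes `count k λ` to `Q k n`, that is
one for every `j ≥ 1` with `j ≤ count k λ`, so `Q k n = ∑_{j ≥ 1} #{λ | j ≤ count k λ}`; likewise
`V k n = ∑_{m ≥ 1} #{λ | k ≤ count m λ}`. Removing `j` copies of `m` is a bijection from the
partitions of `n` with at least `j` parts equal to `m` onto the partitions of `n - j m`, so these
numbers depend only on the product `j m`, and the two sums agree term by term.
-/

open Finset

namespace Nat.Partition

variable {n : ℕ}

theorem mul_le_of_le_count {p : n.Partition} {j m : ℕ} (h : j ≤ p.parts.count m) :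
    j * m ≤ n := by
  obtain ⟨u, hu⟩ := Multiset.le_iff_exists_add.mp (Multiset.le_count_iff_replicate_le.mp h)
  have hsum := congrArg Multiset.sum hu
  rw [p.parts_sum, Multiset.sum_add, Multiset.sum_replicate, smul_eq_mul] at hsum
  omega

theorem count_le (p : n.Partition) {m : ℕ} (hm : 0 < m) : p.parts.count m ≤ n :=
  (Nat.le_mul_of_pos_right _ hm).trans (mul_le_of_le_count le_rfl)

def removeReplicateEquiv (a j : ℕ) {m : ℕ} (hm : 0 < m) :
    {p : (a + j * m).Partition // j ≤ p.parts.count m} ≃ a.Partition where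
  toFun q :=
    { parts := q.1.parts - Multiset.replicate j m
      parts_pos := fun hi => q.1.parts_pos (Multiset.mem_of_le tsub_le_self hi)
      parts_sum := by
        have hsum := congrArg Multiset.sum
          (tsub_add_cancel_of_le (Multiset.le_count_iff_replicate_le.mp q.2))
        rw [Multiset.sum_add, Multiset.sum_replicate, smul_eq_mul, q.1.parts_sum] at hsum
        omega }
  invFun p :=
    ⟨{ parts := p.parts + Multiset.replicate j m
       parts_pos := fun hi => by
         rcases Multiset.mem_add.mp hi with hi | hi
         · exact p.parts_pos hi
         · exact (Multiset.eq_of_mem_replicate hi).symm ▸ hm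
       parts_sum := by simp [p.parts_sum] },
     by simp⟩
  left_inv q := Subtype.ext <| Nat.Partition.ext <|
    tsub_add_cancel_of_le (Multiset.le_count_iff_replicate_le.mp q.2)
  right_inv p := Nat.Partition.ext <| add_tsub_cancel_right _ _

theorem card_filter_le_count (n j : ℕ) {m : ℕ} (hm : 0 < m) :
    #{p : n.Partition | j ≤ p.parts.count m} = if j * m ≤ n then P (n - j * m) else 0 := by
  split_ifs with h
  · obtain ⟨a, rfl⟩ := Nat.exists_eq_add_of_le' h
    rw [← Fintype.card_subtype, Fintype.card_congr (removeReplicateEquiv a j hm),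
      Nat.add_sub_cancel, P]
  · exact Finset.card_eq_zero.mpr <|
      filter_eq_empty_iff.mpr fun _ _ hp => h (mul_le_of_le_count hp)

theorem count_eq_card_filter_Icc (p : n.Partition) {k : ℕ} (hk : 0 < k) :
    p.parts.count k = #{j ∈ Icc 1 n | j ≤ p.parts.count k} := by
  have hIcc : {j ∈ Icc 1 n | j ≤ p.parts.count k} = Icc 1 (p.parts.count k) := by
    ext j
    simp only [mem_filter, mem_Icc]
    have := p.count_le hk
    omega
  rw [hIcc, Nat.card_Icc, Nat.add_sub_cancel]

theorem filter_toFinset_eq_filter_Icc (p : n.Partition) {k : ℕ} (hk : 0 < k) :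
    {m ∈ p.parts.toFinset | k ≤ p.parts.count m} = {m ∈ Icc 1 n | k ≤ p.parts.count m} := by
  ext m
  simp only [mem_filter, Multiset.mem_toFinset, mem_Icc]
  constructor
  · rintro ⟨hm, hc⟩
    exact ⟨⟨p.parts_pos hm, p.le_of_mem_parts hm⟩, hc⟩
  · rintro ⟨-, hc⟩
    exact ⟨Multiset.count_pos.mp (hk.trans_le hc), hc⟩

end Nat.Partition

open Nat.Partition in
theorem stmt_4_general (n k : ℕ) (hk : 0 < k) : Q k n = V k n := by
  calc Q k n = ∑ p : n.Partition, #{j ∈ Icc 1 n | j ≤ p.parts.count k} :=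
        sum_congr rfl fun p _ => p.count_eq_card_filter_Icc hk
    _ = ∑ j ∈ Icc 1 n, #{p : n.Partition | j ≤ p.parts.count k} :=
        sum_card_bipartiteAbove_eq_sum_card_bipartiteBelow _
    _ = ∑ j ∈ Icc 1 n, #{p : n.Partition | k ≤ p.parts.count j} := by
        refine sum_congr rfl fun j hj => ?_
        rw [card_filter_le_count n j hk, card_filter_le_count n k (mem_Icc.mp hj).1, mul_comm]
    _ = ∑ p : n.Partition, #{j ∈ Icc 1 n | k ≤ p.parts.count j} :=
        (sum_card_bipartiteAbove_eq_sum_card_bipartiteBelow _).symm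
    _ = V k n := sum_congr rfl fun p _ => (p.filter_toFinset_eq_filter_Icc hk).symm ▸ rfl

theorem stmt_4 (n k : ℕ) (hn : 0 < n) (hk : 0 < k) : Q k n = V k n :=
  stmt_4_general n k hk
end

section
/- The generating function identity Σ_{m≥0} Q_k(m) x^m = (x^k / (1 - x^k)) · Π_{n≥1} 1/(1 - x^n) holds as an identity of formal power series, for every positive integer k. -/
/-! Removing one part `k` is a bijection from the partitions of `n` that contain `k` onto the
partitions of `n - k`, and it lowers the multiplicity of `k` by one. Hence
`Q k n = Q k (n - k) + P (n - k)` for `k ≤ n`, while `Q k n = 0` for `n < k`; for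
`F = ∑ Q k m X^m` and `G = ∑ P m X^m` this says `F = X ^ k * (F + G)`,
which is solved by dividing by `1 - X ^ k`. -/

lemma Q_eq_zero_of_lt {k n : ℕ} (h : n < k) : Q k n = 0 :=
  Finset.sum_eq_zero fun p _ => Multiset.count_eq_zero.2 fun hk => (p.le_of_mem_parts hk).not_gt h

lemma Q_eq_Q_sub_add_P {k n : ℕ} (hk : 0 < k) (hkn : k ≤ n) :
    Q k n = Q k (n - k) + P (n - k) := by
  calc Q k n = ∑ p : {p : n.Partition // k ∈ p.parts}, p.1.parts.count k := by
        rw [Q, ← Finset.sum_filter_of_ne fun p _ => Multiset.count_ne_zero.1]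
        exact Finset.sum_subtype _ (by simp) _
    _ = ∑ p : (n - k).Partition, (p.parts.count k + 1) :=
        ((Nat.Partition.partitionWithPartEquiv hk hkn).symm.sum_comp _).symm.trans <| by simp
    _ = Q k (n - k) + P (n - k) := by simp [Finset.sum_add_distrib, Q, P]

open PowerSeries in
lemma mk_Q_eq_X_pow_mul {k : ℕ} (hk : 0 < k) :
    PowerSeries.mk (fun m => (Q k m : ℚ)) =
      X ^ k * (PowerSeries.mk (fun m => (Q k m : ℚ)) +
        PowerSeries.mk (fun m => (P m : ℚ))) := by
  ext m
  rw [coeff_X_pow_mul', coeff_mk]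
  split_ifs with hkm
  · simp [Q_eq_Q_sub_add_P hk hkm]
  · simp [Q_eq_zero_of_lt (not_le.1 hkm)]

open PowerSeries in
theorem stmt_11 (k : ℕ) (hk : 0 < k) :
    PowerSeries.mk (fun m => (Q k m : ℚ)) =
      (X ^ k) * (1 - X ^ k : PowerSeries ℚ)⁻¹ * PowerSeries.mk (fun m => (P m : ℚ)) := by
  have hconst : constantCoeff (1 - X ^ k : PowerSeries ℚ) ≠ 0 := by
    simp [zero_pow hk.ne']
  rw [mul_right_comm, eq_mul_inv_iff_mul_eq hconst]
  linear_combination mk_Q_eq_X_pow_mul hk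
end

section
/- For every positive integer n, S(n) = Σ_{i=0}^{n-1} P(i), where S(n) is the sum over all partitions of n of the number of distinct parts. -/
/-!
Count the pairs `(λ, m)` with `λ ⊢ n` and `m` a part of `λ` in two ways. Grouped by `λ` they give
`S n`. Grouped by `m`, removing one copy of `m` is a bijection onto the partitions of `n - m`,
so they give `∑_{m=1}^{n} P (n - m) = ∑_{i<n} P i`.
-/

open Finset

namespace Nat.Partition

lemma toFinset_parts_eq_filter_Icc {n : ℕ} (p : n.Partition) :
    p.parts.toFinset = {m ∈ Icc 1 n | m ∈ p.parts} := by
  ext m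
  simp only [Multiset.mem_toFinset, mem_filter, mem_Icc]
  exact ⟨fun hm => ⟨⟨p.parts_pos hm, le_of_mem_parts hm⟩, hm⟩, And.right⟩

lemma card_subtype_mem_parts {n m : ℕ} (hm : 1 ≤ m) (hmn : m ≤ n) :
    Fintype.card {p : n.Partition // m ∈ p.parts} = P (n - m) :=
  Fintype.card_congr (partitionWithPartEquiv hm hmn)

end Nat.Partition

theorem S_eq_sum_Icc (n : ℕ) : S n = ∑ m ∈ Icc 1 n, P (n - m) := by
  calc S n = ∑ p : n.Partition, #((Icc 1 n).bipartiteAbove (fun p m => m ∈ p.parts) p) := by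
        simp only [S, bipartiteAbove, Nat.Partition.toFinset_parts_eq_filter_Icc]
    _ = ∑ m ∈ Icc 1 n, #((univ : Finset n.Partition).bipartiteBelow (fun p m => m ∈ p.parts) m) :=
        sum_card_bipartiteAbove_eq_sum_card_bipartiteBelow _
    _ = ∑ m ∈ Icc 1 n, P (n - m) := by
        refine sum_congr rfl fun m hm => ?_
        obtain ⟨hm1, hmn⟩ := mem_Icc.1 hm
        rw [← Nat.Partition.card_subtype_mem_parts hm1 hmn, Fintype.card_subtype]
        rfl

theorem stmt_16_general (n : ℕ) :
    S n = ∑ i ∈ Finset.range n, P i := by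
  rw [S_eq_sum_Icc, ← Ico_add_one_right_eq_Icc, sum_Ico_reflect _ _ le_rfl]
  simp

theorem stmt_16 (n : ℕ) (hn : 0 < n) :
    S n = ∑ i ∈ Finset.range n, P i :=
  stmt_16_general n
end
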